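/- For fixed $\mu > 0$, the function $\epsilon \mapsto \delta_\mu(\epsilon) = \Phi(-\epsilon/\mu + \mu/2) - e^{\epsilon}\Phi(-\epsilon/\mu - \mu/2)$ is monotonically nonincreasing on $[0, \infty)$. -/

import Mathlib

open ProbabilityTheory

/-- Standard normal cumulative distribution function. -/
noncomputable def Phi (t : ℝ) : ℝ := (gaussianReal 0 1 (Set.Iic t)).toReal

/-- The `(ε, δ)`-DP curve of `μ`-Gaussian Differential Privacy. -/
noncomputable def deltaMu (μ ε : ℝ) : ℝ :=
  Phi (-ε / μ + μ / 2) - Real.exp ε * Phi (-ε / μ - μ / 2)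

lemma continuous_gpdf : Continuous (gaussianPDFReal 0 1) := by
  unfold gaussianPDFReal
  fun_prop

lemma Phi_eq (t : ℝ) : Phi t = ∫ x in Set.Iic t, gaussianPDFReal 0 1 x := by
  rw [Phi, gaussianReal_apply_eq_integral 0 one_ne_zero,
    ENNReal.toReal_ofReal]
  exact MeasureTheory.integral_nonneg (fun x => gaussianPDFReal_nonneg _ _ _)

lemma Phi_hasDerivAt (t : ℝ) : HasDerivAt Phi (gaussianPDFReal 0 1 t) t := by
  have h : ∀ s : ℝ, Phi s = Phi 0 + ∫ x in (0:ℝ)..s, gaussianPDFReal 0 1 x := by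
    intro s
    rw [Phi_eq, Phi_eq, ← intervalIntegral.integral_Iic_sub_Iic
      ((integrable_gaussianPDFReal 0 1).integrableOn)
      ((integrable_gaussianPDFReal 0 1).integrableOn)]
    ring
  have := ((continuous_gpdf.integral_hasStrictDerivAt 0 t).hasDerivAt).const_add (Phi 0)
  exact this.congr_of_eventuallyEq (Filter.Eventually.of_forall fun s => h s)

lemma Phi_nonneg (t : ℝ) : 0 ≤ Phi t := ENNReal.toReal_nonneg

lemma key_identity (μ ε : ℝ) (hμ : 0 < μ) :
    Real.exp ε * gaussianPDFReal 0 1 (-ε / μ - μ / 2) =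
      gaussianPDFReal 0 1 (-ε / μ + μ / 2) := by
  unfold gaussianPDFReal
  push_cast
  rw [mul_comm (Real.exp ε), mul_assoc, ← Real.exp_add]
  congr 2
  field_simp
  ring

lemma deltaMu_hasDerivAt (μ ε : ℝ) (hμ : 0 < μ) :
    HasDerivAt (deltaMu μ)
      (-(Real.exp ε * Phi (-ε / μ - μ / 2))) ε := by
  have h1 : HasDerivAt (fun ε : ℝ => -ε / μ + μ / 2) (-1 / μ) ε := by
    simpa using (((hasDerivAt_id ε).neg.div_const μ).add_const (μ / 2))
  have h2 : HasDerivAt (fun ε : ℝ => -ε / μ - μ / 2) (-1 / μ) ε := by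
    simpa using (((hasDerivAt_id ε).neg.div_const μ).sub_const (μ / 2))
  have hA : HasDerivAt (fun ε : ℝ => Phi (-ε / μ + μ / 2))
      (gaussianPDFReal 0 1 (-ε / μ + μ / 2) * (-1 / μ)) ε :=
    (Phi_hasDerivAt _).comp ε h1
  have hB : HasDerivAt (fun ε : ℝ => Phi (-ε / μ - μ / 2))
      (gaussianPDFReal 0 1 (-ε / μ - μ / 2) * (-1 / μ)) ε :=
    (Phi_hasDerivAt _).comp ε h2
  have hE : HasDerivAt Real.exp (Real.exp ε) ε := Real.hasDerivAt_exp ε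
  have := hA.sub (hE.mul hB)
  refine this.congr_deriv ?_
  rw [← key_identity μ ε hμ]
  ring

theorem stmt5 (μ : ℝ) (hμ : 0 < μ) :
    AntitoneOn (deltaMu μ) (Set.Ici 0) := by
  have hdiff : ∀ ε : ℝ, HasDerivAt (deltaMu μ)
      (-(Real.exp ε * Phi (-ε / μ - μ / 2))) ε := fun ε => deltaMu_hasDerivAt μ ε hμ
  apply antitoneOn_of_deriv_nonpos (convex_Ici 0)
  · exact Continuous.continuousOn (by
      have : Differentiable ℝ (deltaMu μ) := fun ε => (hdiff ε).differentiableAt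
      exact this.continuous)
  · exact fun x _ => ((hdiff x).differentiableAt).differentiableWithinAt
  · intro x _
    rw [(hdiff x).deriv]
    have := Phi_nonneg (-x / μ - μ / 2)
    have := Real.exp_pos x
    nlinarith
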